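/- Let n ≥ 2, N = 2n, h = 1/n, d ≥ 1, and c ∈ ℝ. The d-dimensional periodic matrix A_h^P maps the range of E_{o,h}^{⊗d} into itself: for every u ∈ range(E_{o,h}^{⊗d}), A_h^P u ∈ range(E_{o,h}^{⊗d}). Consequently (together with A_h^D = R_{o,h}^{⊗d} A_h^P E_{o,h}^{⊗d}), the pair (A_h^D, A_h^P) is LFA-compatible. -/

import Mathlib

open Matrix Finset

noncomputable section

/-- The tridiagonal matrix `tridiag(-1, 2, -1)` of size `m × m` (0-based indexing). -/
def tridiag (m : ℕ) : Matrix (Fin m) (Fin m) ℝ :=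
  Matrix.of fun i j =>
    if (i : ℕ) = (j : ℕ) then 2
    else if (i : ℕ) + 1 = (j : ℕ) ∨ (j : ℕ) + 1 = (i : ℕ) then -1 else 0

/-- The odd extension operator `E_{o,h} : ℝ^{n-1} → ℝ^{2n}`, sending the basis vector
`e_i^{n-1}` (math index `i = 1,…,n-1`) to `e_i^{2n} - e_{2n-i}^{2n}`.
In 0-based indexing, column `i` has entry `1` in row `i` and `-1` in row `2n - i - 2`. -/
def oddExt (n : ℕ) : Matrix (Fin (2 * n)) (Fin (n - 1)) ℝ :=
  Matrix.of fun k i =>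
    if (k : ℕ) = (i : ℕ) then 1
    else if (k : ℕ) + (i : ℕ) + 2 = 2 * n then -1 else 0

/-- The restriction operator `R_{o,h} = (1/2) E_{o,h}ᵀ`. -/
def oddRestr (n : ℕ) : Matrix (Fin (n - 1)) (Fin (2 * n)) ℝ :=
  (2 : ℝ)⁻¹ • (oddExt n)ᵀ

/-- The Dirichlet matrix `T_h^D = (1/h²) · tridiag(-1, 2, -1)`, with `h = 1/n`
(so `1/h² = n²`). -/
def ThD (n : ℕ) : Matrix (Fin (n - 1)) (Fin (n - 1)) ℝ :=
  ((n : ℝ) ^ 2) • tridiag (n - 1)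

/-- The periodic matrix `T_h^P = (1/h²) · (tridiag(-1,2,-1) - e₁ e_Nᵀ - e_N e₁ᵀ)`,
with `h = 1/n`, `N = 2n` (0-based: corners at `(0, 2n-1)` and `(2n-1, 0)`). -/
def ThP (n : ℕ) : Matrix (Fin (2 * n)) (Fin (2 * n)) ℝ :=
  ((n : ℝ) ^ 2) •
    (tridiag (2 * n)
      - Matrix.of (fun (i j : Fin (2 * n)) => if (i : ℕ) = 0 ∧ (j : ℕ) = 2 * n - 1 then 1 else 0)
      - Matrix.of (fun (i j : Fin (2 * n)) => if (i : ℕ) = 2 * n - 1 ∧ (j : ℕ) = 0 then 1 else 0))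

/-- The `d`-fold Kronecker power `X^{⊗d}`, where `ℝ^{a^d}` is identified with the
space of functions `(Fin d → Fin a) → ℝ`. -/
def kronPow {a b : ℕ} (d : ℕ) (X : Matrix (Fin a) (Fin b) ℝ) :
    Matrix (Fin d → Fin a) (Fin d → Fin b) ℝ :=
  Matrix.of fun i j => ∏ t, X (i t) (j t)

/-- `Σ_{t=1}^d I^{⊗(t-1)} ⊗ T ⊗ I^{⊗(d-t)}` in the function-indexed representation. -/
def kronSumId {m : ℕ} (d : ℕ) (T : Matrix (Fin m) (Fin m) ℝ) :
    Matrix (Fin d → Fin m) (Fin d → Fin m) ℝ :=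
  ∑ t : Fin d, Matrix.of fun i j =>
    T (i t) (j t) * ∏ s ∈ Finset.univ.erase t, (if i s = j s then (1 : ℝ) else 0)

/-- The `d`-dimensional discrete Dirichlet reaction-diffusion matrix
`A_h^D = Σ_j I^{⊗(j-1)} ⊗ T_h^D ⊗ I^{⊗(d-j)} + c I^{⊗d}`. -/
def AD (n d : ℕ) (c : ℝ) : Matrix (Fin d → Fin (n - 1)) (Fin d → Fin (n - 1)) ℝ :=
  kronSumId d (ThD n) + c • 1

/-- The `d`-dimensional discrete periodic reaction-diffusion matrix
`A_h^P = Σ_j I^{⊗(j-1)} ⊗ T_h^P ⊗ I^{⊗(d-j)} + c I^{⊗d}`. -/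
def AP (n d : ℕ) (c : ℝ) : Matrix (Fin d → Fin (2 * n)) (Fin d → Fin (2 * n)) ℝ :=
  kronSumId d (ThP n) + c • 1

/-- A pair `(M^D, M^P)` is LFA-compatible with respect to an extension `E` and a
restriction `R` if `M^D = R M^P E` and `M^P` maps `range E` into itself. -/
def LFACompatible {α β : Type*} [Fintype α] [Fintype β]
    (E : Matrix α β ℝ) (R : Matrix β α ℝ)
    (MD : Matrix β β ℝ) (MP : Matrix α α ℝ) : Prop :=
  MD = R * MP * E ∧ ∀ v ∈ Set.range E.mulVec, MP *ᵥ v ∈ Set.range E.mulVec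

/-! The columns of `oddExt n` are odd about the two fixed points `n - 1` and `2n - 1` (0-based) of
the reflection `k ↦ 2n - 2 - k` of the periodic grid, and they vanish there. Hence the periodic
second difference of an odd extension is the odd extension of the Dirichlet second difference:
`ThP n * oddExt n = oddExt n * ThD n`. Such an intertwining passes to Kronecker sums, because
`Σ_t I ⊗ ⋯ ⊗ T ⊗ ⋯ ⊗ I` is a sum of Kronecker products of families and those multiply factorwise;
so `AP * E = E * AD` for `E = oddExt n ^ ⊗d`. This gives the invariance of `range E`, and together
with `oddRestr n * oddExt n = 1` (the columns of `oddExt n` are orthogonal of squared norm 2) also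
`R * AP * E = R * E * AD = AD`. -/

def kronPi {ι α β : Type*} [Fintype ι] (X : ι → Matrix α β ℝ) : Matrix (ι → α) (ι → β) ℝ :=
  Matrix.of fun i j => ∏ t, X t (i t) (j t)

section KroneckerFamily

variable {ι α β γ : Type*} [Fintype ι]

theorem kronPi_mul [DecidableEq ι] [Fintype β] (X : ι → Matrix α β ℝ) (Y : ι → Matrix β γ ℝ) :
    kronPi X * kronPi Y = kronPi fun t => X t * Y t := by
  ext i j
  simp only [kronPi, mul_apply, of_apply, Fintype.prod_sum, prod_mul_distrib]

theorem kronPi_one [DecidableEq ι] [DecidableEq α] : kronPi (1 : ι → Matrix α α ℝ) = 1 := by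
  ext i j
  simp [kronPi, one_apply, Finset.prod_boole, funext_iff]

end KroneckerFamily

theorem kronPow_eq_kronPi {a b : ℕ} (d : ℕ) (X : Matrix (Fin a) (Fin b) ℝ) :
    kronPow d X = kronPi fun _ => X :=
  rfl

theorem kronPow_mul_kronPow_eq_one {a b : ℕ} (d : ℕ) {X : Matrix (Fin a) (Fin b) ℝ}
    {Y : Matrix (Fin b) (Fin a) ℝ} (h : X * Y = 1) : kronPow d X * kronPow d Y = 1 := by
  rw [kronPow_eq_kronPi, kronPow_eq_kronPi, kronPi_mul, h]
  exact kronPi_one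

theorem kronSumId_eq_sum_kronPi {d m : ℕ} (T : Matrix (Fin m) (Fin m) ℝ) :
    kronSumId d T = ∑ t, kronPi (Function.update 1 t T) := by
  ext i j
  simp only [kronSumId, kronPi, Matrix.sum_apply, of_apply]
  refine Finset.sum_congr rfl fun t _ => ?_
  rw [← Finset.mul_prod_erase _ _ (Finset.mem_univ t), Function.update_self]
  congr 1
  refine Finset.prod_congr rfl fun s hs => ?_
  rw [Function.update_of_ne (Finset.ne_of_mem_erase hs), Pi.one_apply, one_apply]

theorem kronSumId_mul_kronPow {d a b : ℕ} {T : Matrix (Fin a) (Fin a) ℝ}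
    {E : Matrix (Fin a) (Fin b) ℝ} {T' : Matrix (Fin b) (Fin b) ℝ} (h : T * E = E * T') :
    kronSumId d T * kronPow d E = kronPow d E * kronSumId d T' := by
  rw [kronSumId_eq_sum_kronPi, kronSumId_eq_sum_kronPi, Matrix.sum_mul, Matrix.mul_sum,
    kronPow_eq_kronPi]
  refine Finset.sum_congr rfl fun t _ => ?_
  rw [kronPi_mul, kronPi_mul]
  congr 1
  ext1 s
  rcases eq_or_ne s t with rfl | hs
  · simp [h]
  · simp [Function.update_of_ne hs]

theorem Fin.sum_ite_val_eq {N : ℕ} (a : ℕ) (f : Fin N → ℝ) :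
    ∑ l : Fin N, (if (l : ℕ) = a then f l else 0) = if h : a < N then f ⟨a, h⟩ else 0 := by
  split_ifs with h
  · rw [Finset.sum_eq_single ⟨a, h⟩ (fun l _ hl => if_neg fun hla => hl (Fin.ext hla)) (by simp)]
    simp
  · exact Finset.sum_eq_zero fun l _ => if_neg fun (hla : (l : ℕ) = a) => h (hla ▸ l.isLt)

theorem oddExt_apply (n : ℕ) (k : Fin (2 * n)) (i : Fin (n - 1)) :
    oddExt n k i =
      (if (k : ℕ) = i then 1 else 0) - (if (k : ℕ) = 2 * n - 2 - i then 1 else 0) := by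
  have := i.isLt
  simp only [oddExt, of_apply]
  split_ifs <;> first | omega | norm_num

theorem ThP_apply (n : ℕ) (k l : Fin (2 * n)) :
    ThP n k l = (n : ℝ) ^ 2 *
      (2 * (if (l : ℕ) = k then 1 else 0) - (if (l : ℕ) = k + 1 then 1 else 0)
        - (if (l : ℕ) = k - 1 ∧ 1 ≤ (k : ℕ) then 1 else 0)
        - (if (l : ℕ) = 2 * n - 1 ∧ (k : ℕ) = 0 then 1 else 0)
        - (if (l : ℕ) = 0 ∧ (k : ℕ) = 2 * n - 1 then 1 else 0)) := by
  simp only [ThP, tridiag, Matrix.smul_apply, Matrix.sub_apply, of_apply, smul_eq_mul]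
  grind

theorem ThD_apply (n : ℕ) (j i : Fin (n - 1)) :
    ThD n j i = (n : ℝ) ^ 2 *
      (2 * (if (j : ℕ) = i then 1 else 0) - (if (j : ℕ) = i + 1 then 1 else 0)
        - (if (j : ℕ) = i - 1 ∧ 1 ≤ (i : ℕ) then 1 else 0)) := by
  simp only [ThD, tridiag, Matrix.smul_apply, of_apply, smul_eq_mul]
  grind

theorem ThP_mul_oddExt (n : ℕ) : ThP n * oddExt n = oddExt n * ThD n := by
  ext k i
  simp only [mul_apply, ThP_apply, ThD_apply, mul_sub, sub_mul, mul_assoc, ite_mul, mul_ite,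
    zero_mul, mul_one, mul_zero, ite_and, Finset.sum_sub_distrib, Fin.sum_ite_val_eq]
  simp only [oddExt_apply]
  grind (splits := 100)

theorem transpose_oddExt_mul_oddExt (n : ℕ) : (oddExt n)ᵀ * oddExt n = (2 : ℝ) • 1 := by
  ext j i
  simp only [mul_apply, transpose_apply, oddExt_apply, sub_mul, mul_sub, ite_mul, one_mul,
    zero_mul, Finset.sum_sub_distrib, Fin.sum_ite_val_eq, Matrix.smul_apply, smul_eq_mul,
    one_apply, Fin.ext_iff]
  grind

theorem oddRestr_mul_oddExt (n : ℕ) : oddRestr n * oddExt n = 1 := by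
  rw [oddRestr, Matrix.smul_mul, transpose_oddExt_mul_oddExt, smul_smul]
  norm_num

theorem AP_mul_kronPow_oddExt (n d : ℕ) (c : ℝ) :
    AP n d c * kronPow d (oddExt n) = kronPow d (oddExt n) * AD n d c := by
  rw [AP, AD, Matrix.add_mul, Matrix.mul_add, kronSumId_mul_kronPow (ThP_mul_oddExt n),
    Matrix.smul_mul, Matrix.mul_smul, Matrix.one_mul, Matrix.mul_one]

section Compatibility

variable {α β : Type*} [Fintype α] [Fintype β] {A : Matrix α α ℝ} {E : Matrix α β ℝ}
  {B : Matrix β β ℝ}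

theorem mulVec_mem_range_of_mul_eq_mul (h : A * E = E * B) :
    ∀ u ∈ Set.range E.mulVec, A *ᵥ u ∈ Set.range E.mulVec := by
  rintro _ ⟨w, rfl⟩
  exact ⟨B *ᵥ w, by rw [mulVec_mulVec, mulVec_mulVec, h]⟩

theorem LFACompatible.of_mul_eq_mul [DecidableEq β] {R : Matrix β α ℝ} (h : A * E = E * B)
    (hRE : R * E = 1) : LFACompatible E R B A :=
  ⟨by rw [Matrix.mul_assoc, h, ← Matrix.mul_assoc, hRE, Matrix.one_mul],
    mulVec_mem_range_of_mul_eq_mul h⟩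

end Compatibility

theorem AP_invariant_and_LFACompatible_general (n d : ℕ) (c : ℝ) :
    (∀ u ∈ Set.range (kronPow d (oddExt n)).mulVec,
      AP n d c *ᵥ u ∈ Set.range (kronPow d (oddExt n)).mulVec) ∧
    LFACompatible (kronPow d (oddExt n)) (kronPow d (oddRestr n)) (AD n d c) (AP n d c) := by
  have hAP := AP_mul_kronPow_oddExt n d c
  exact ⟨mulVec_mem_range_of_mul_eq_mul hAP,
    LFACompatible.of_mul_eq_mul hAP (kronPow_mul_kronPow_eq_one d (oddRestr_mul_oddExt n))⟩

/-- `A_h^P` maps `range E_{o,h}^{⊗d}` into itself; consequently the pair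
`(A_h^D, A_h^P)` is LFA-compatible. -/
theorem AP_invariant_and_LFACompatible (n d : ℕ) (hn : 2 ≤ n) (hd : 1 ≤ d) (c : ℝ) :
    (∀ u ∈ Set.range (kronPow d (oddExt n)).mulVec,
      AP n d c *ᵥ u ∈ Set.range (kronPow d (oddExt n)).mulVec) ∧
    LFACompatible (kronPow d (oddExt n)) (kronPow d (oddRestr n)) (AD n d c) (AP n d c) :=
  AP_invariant_and_LFACompatible_general n d c
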